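/- arXiv:1811.04121 — 2 statements merged into one kernel-verified Lean document; each statement's English description precedes it below -/
import Mathlib

section
/- Let Z be a standard normal random variable. Then for every t ≥ 0, E[(|Z| - t)₊²] ≤ 4 exp(-t²/2) / ((t² + 2) √(2π t² + 4)). -/
/-!
By symmetry of the Gaussian, `E[(|Z| - t)₊²] = √(2/π) ∫_t^∞ (x - t)² e^{-x²/2} dx`, and
integrating by parts this equals `√(2/π) ((t² + 1) E(t) - t e^{-t²/2})` with
`E(t) = ∫_t^∞ e^{-x²/2} dx`. The claim is therefore the Mills-ratio bound
`E(t) ≤ B(t) := e^{-t²/2} (t + 2 / ((t² + 2) √(t² + 2/π))) / (t² + 1)`.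
The gap `B - E` vanishes at `0` (this is what fixes the constant `2/π`) and is bounded below by
`-E → 0` at infinity; its derivative is `e^{-t²/2}` times a function whose sign is that of `-D(t²)`
for a polynomial `D` that increases on `[0, ∞)` and changes sign in `[0, 1]`. So the gap first
increases and then decreases, and it is nonnegative on `[0, ∞)`.
-/

open MeasureTheory ProbabilityTheory Real Set Filter Topology

theorem hasDerivAt_integral_Ioi {f : ℝ → ℝ} (hf : Integrable f) (hc : Continuous f) (t : ℝ) :
    HasDerivAt (fun s => ∫ x in Ioi s, f x) (-f t) t := by
  have hsplit : ∀ s, ∫ x in Ioi s, f x = (∫ x in Ioi 0, f x) - ∫ x in (0 : ℝ)..s, f x := fun s =>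
    eq_sub_of_add_eq' (intervalIntegral.integral_interval_add_Ioi hf.integrableOn hf.integrableOn)
  rw [funext hsplit]
  exact (intervalIntegral.integral_hasDerivAt_right hf.intervalIntegrable
    hc.aestronglyMeasurable.stronglyMeasurableAtFilter hc.continuousAt).const_sub _

theorem hasDerivAt_exp_neg_sq_div_two (x : ℝ) :
    HasDerivAt (fun y : ℝ => exp (-y ^ 2 / 2)) (exp (-x ^ 2 / 2) * -x) x := by
  refine ((hasDerivAt_pow 2 x).neg.div_const 2).exp.congr_deriv ?_
  simp only [Nat.cast_ofNat, Pi.neg_apply]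
  ring

theorem integrable_pow_mul_exp_neg_sq_div_two (n : ℕ) :
    Integrable fun x : ℝ => x ^ n * exp (-x ^ 2 / 2) := by
  convert integrable_rpow_mul_exp_neg_mul_sq (b := 1 / 2) (by norm_num) (s := n)
    (by linarith [n.cast_nonneg (α := ℝ)]) using 3 with x
  · exact (rpow_natCast x n).symm
  · ring_nf

theorem tendsto_pow_mul_exp_neg_sq_div_two_atTop (n : ℕ) :
    Tendsto (fun x : ℝ => x ^ n * exp (-x ^ 2 / 2)) atTop (𝓝 0) := by
  refine ((tendsto_rpow_abs_mul_exp_neg_mul_sq_cocompact (a := 1 / 2) (by norm_num) n).mono_left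
    atTop_le_cocompact).congr' ?_
  filter_upwards [eventually_ge_atTop 0] with x hx
  rw [abs_of_nonneg hx, rpow_natCast]
  ring_nf

theorem nonneg_of_hasDerivAt_of_sign_change {f f' g : ℝ → ℝ} {a c x : ℝ}
    (hf : ∀ y, HasDerivAt f (f' y) y) (hinc : ∀ y ∈ Ioo a c, 0 ≤ f' y)
    (hdec : ∀ y ∈ Ioi c, f' y ≤ 0) (ha : 0 ≤ f a) (hg : Tendsto g atTop (𝓝 0))
    (hgf : ∀ᶠ y in atTop, g y ≤ f y) (hx : a ≤ x) : 0 ≤ f x := by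
  have hcont : Continuous f := continuous_iff_continuousAt.2 fun y => (hf y).continuousAt
  rcases le_or_gt x c with hxc | hcx
  · have hmono : MonotoneOn f (Icc a c) :=
      monotoneOn_of_hasDerivWithinAt_nonneg (convex_Icc a c) hcont.continuousOn
        (fun y _ => (hf y).hasDerivWithinAt) fun y hy => hinc y (by rwa [interior_Icc] at hy)
    exact ha.trans (hmono ⟨le_rfl, hx.trans hxc⟩ ⟨hx, hxc⟩ hx)
  · have hanti : AntitoneOn f (Ici x) :=
      antitoneOn_of_hasDerivWithinAt_nonpos (convex_Ici x) hcont.continuousOn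
        (fun y _ => (hf y).hasDerivWithinAt) fun y hy =>
          hdec y (hcx.trans (by rwa [interior_Ici] at hy))
    refine le_of_tendsto hg ?_
    filter_upwards [hgf, eventually_ge_atTop x] with y hgy hxy
    exact hgy.trans (hanti self_mem_Ici hxy hxy)

theorem integral_comp_abs_gaussianReal {v : NNReal} (hv : v ≠ 0) (f : ℝ → ℝ) :
    ∫ x, f |x| ∂gaussianReal 0 v = 2 * ∫ x in Ioi 0, gaussianPDFReal 0 v x * f x := by
  rw [integral_gaussianReal_eq_integral_smul hv,
    ← integral_comp_abs (f := fun x => gaussianPDFReal 0 v x * f x)]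
  congr 1 with x
  simp [gaussianPDFReal, smul_eq_mul]

theorem integral_gaussianReal_posPart_abs_sub_sq {t : ℝ} (ht : 0 ≤ t) :
    ∫ x, (max (|x| - t) 0) ^ 2 ∂gaussianReal 0 1 =
      2 / √(2 * π) * ∫ x in Ioi t, (x - t) ^ 2 * exp (-x ^ 2 / 2) := by
  rw [integral_comp_abs_gaussianReal one_ne_zero (fun y => (max (y - t) 0) ^ 2),
    setIntegral_eq_of_subset_of_forall_sdiff_eq_zero measurableSet_Ioi (Ioi_subset_Ioi ht)
      fun x hx => by simp [notMem_Ioi.1 hx.2],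
    div_eq_mul_inv, mul_assoc, ← integral_const_mul (√(2 * π))⁻¹]
  congr 1
  refine setIntegral_congr_fun measurableSet_Ioi fun x (hx : t < x) => ?_
  simp only [max_eq_left (sub_nonneg.2 hx.le), gaussianPDFReal, NNReal.coe_one, mul_one, sub_zero]
  ring

noncomputable def gaussianTail (t : ℝ) : ℝ := ∫ x in Ioi t, exp (-x ^ 2 / 2)

theorem hasDerivAt_gaussianTail (t : ℝ) : HasDerivAt gaussianTail (-exp (-t ^ 2 / 2)) t :=
  hasDerivAt_integral_Ioi (by simpa using integrable_pow_mul_exp_neg_sq_div_two 0)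
    (by fun_prop) t

theorem tendsto_gaussianTail_atTop : Tendsto gaussianTail atTop (𝓝 0) :=
  tendsto_integral_Ioi_zero tendsto_id

theorem gaussianTail_zero : gaussianTail 0 = √(2 * π) / 2 := by
  have h := integral_gaussian_Ioi (1 / 2)
  simp only [gaussianTail]
  convert h using 1
  · congr 1 with x; ring_nf
  · rw [div_div_eq_mul_div, div_one, mul_comm]

theorem integral_Ioi_sub_sq_mul_exp_neg_sq_div_two (t : ℝ) :
    ∫ x in Ioi t, (x - t) ^ 2 * exp (-x ^ 2 / 2) =
      (t ^ 2 + 1) * gaussianTail t - t * exp (-t ^ 2 / 2) := by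
  set F : ℝ → ℝ := fun y => (2 * t - y) * exp (-y ^ 2 / 2) - (t ^ 2 + 1) * gaussianTail y
  have hF : ∀ x ∈ Ici t, HasDerivAt F ((x - t) ^ 2 * exp (-x ^ 2 / 2)) x := by
    intro x _
    refine ((((hasDerivAt_id x).const_sub (2 * t)).mul (hasDerivAt_exp_neg_sq_div_two x)).sub
      ((hasDerivAt_gaussianTail x).const_mul (t ^ 2 + 1))).congr_deriv ?_
    simp only [id]
    ring
  have hint : Integrable fun x : ℝ => (x - t) ^ 2 * exp (-x ^ 2 / 2) := by
    have h := ((integrable_pow_mul_exp_neg_sq_div_two 2).sub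
      ((integrable_pow_mul_exp_neg_sq_div_two 1).const_mul (2 * t))).add
      ((integrable_pow_mul_exp_neg_sq_div_two 0).const_mul (t ^ 2))
    refine h.congr (ae_of_all _ fun x => ?_)
    simp only [Pi.add_apply, Pi.sub_apply]
    ring
  have hF_top : Tendsto F atTop (𝓝 0) := by
    have h := ((tendsto_pow_mul_exp_neg_sq_div_two_atTop 0).const_mul (2 * t)).sub
      (tendsto_pow_mul_exp_neg_sq_div_two_atTop 1) |>.sub
      (tendsto_gaussianTail_atTop.const_mul (t ^ 2 + 1))
    simp only [mul_zero, sub_zero] at h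
    refine h.congr fun y => ?_
    simp only [F]
    ring
  rw [integral_Ioi_of_hasDerivAt_of_tendsto' hF hint.integrableOn hF_top]
  simp only [F]
  ring

def gapDerivPoly (a u : ℝ) : ℝ :=
  (u + 3) * (u + 2) * (u + a) + (u + 1) * (2 * (u + a) + u + 2)

def gapDerivSignPoly (a u : ℝ) : ℝ :=
  u * gapDerivPoly a u ^ 2 - (u + 2) ^ 4 * (u + a) ^ 3

theorem gapDerivSignPoly_eq (a u : ℝ) :
    gapDerivSignPoly a u = -16 * a ^ 3 + (4 + 32 * a + 16 * a ^ 2 - 32 * a ^ 3) * u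
      + (44 + 156 * a + 16 * a ^ 2 - 24 * a ^ 3) * u ^ 2
      + (137 + 190 * a - 7 * a ^ 2 - 8 * a ^ 3) * u ^ 3
      + (148 + 78 * a - 10 * a ^ 2 - a ^ 3) * u ^ 4 + (62 + 6 * a - 2 * a ^ 2) * u ^ 5
      + (8 - a) * u ^ 6 := by
  unfold gapDerivSignPoly gapDerivPoly
  ring

theorem gapDerivSignPoly_zero (a : ℝ) : gapDerivSignPoly a 0 = -16 * a ^ 3 := by
  simp [gapDerivSignPoly_eq]

theorem gapDerivSignPoly_one_nonneg {a : ℝ} (ha₀ : 0 ≤ a) (ha₁ : a ≤ 1) :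
    0 ≤ gapDerivSignPoly a 1 := by
  rw [gapDerivSignPoly_eq]
  nlinarith [pow_le_one₀ ha₀ ha₁ (n := 3), pow_nonneg ha₀ 2, pow_nonneg ha₀ 3]

theorem monotoneOn_gapDerivSignPoly {a : ℝ} (ha₀ : 0 ≤ a) (ha₁ : a ≤ 1) :
    MonotoneOn (gapDerivSignPoly a) (Ici 0) := by
  intro x (hx : 0 ≤ x) y _ hxy
  have h2 : a ^ 2 ≤ a := by nlinarith
  have h3 : a ^ 3 ≤ a ^ 2 := by nlinarith
  simp only [gapDerivSignPoly_eq]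
  gcongr
  all_goals nlinarith

noncomputable def gaussianTailBound (a t : ℝ) : ℝ :=
  exp (-t ^ 2 / 2) * (t + 2 / ((t ^ 2 + 2) * √(t ^ 2 + a))) / (t ^ 2 + 1)

noncomputable def gapDeriv (a t : ℝ) : ℝ :=
  2 * exp (-t ^ 2 / 2) *
      ((t ^ 2 + 2) ^ 2 * (t ^ 2 + a) * √(t ^ 2 + a) - t * gapDerivPoly a (t ^ 2)) /
    ((t ^ 2 + 1) ^ 2 * (t ^ 2 + 2) ^ 2 * √(t ^ 2 + a) ^ 3)

theorem hasDerivAt_gaussianTailBound_sub_gaussianTail {a : ℝ} (ha : 0 < a) (t : ℝ) :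
    HasDerivAt (fun s => gaussianTailBound a s - gaussianTail s) (gapDeriv a t) t := by
  have hv2 : √(t ^ 2 + a) ^ 2 = t ^ 2 + a := sq_sqrt (by positivity)
  have hsq : ∀ c : ℝ, HasDerivAt (fun s : ℝ => s ^ 2 + c) (2 * t) t := fun c => by
    simpa using (hasDerivAt_pow 2 t).add_const c
  have hden : HasDerivAt (fun s => (s ^ 2 + 2) * √(s ^ 2 + a))
      (2 * t * √(t ^ 2 + a) + (t ^ 2 + 2) * (2 * t / (2 * √(t ^ 2 + a)))) t :=
    (hsq 2).mul ((hsq a).sqrt (by positivity))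
  have hB := ((hasDerivAt_exp_neg_sq_div_two t).mul ((hasDerivAt_id t).add ((hasDerivAt_const t (2 : ℝ)).div hden
    (by positivity)))).div (hsq 1) (by positivity)
  refine (hB.sub (hasDerivAt_gaussianTail t)).congr_deriv ?_
  simp only [gapDeriv, gapDerivPoly, Pi.mul_apply, Pi.div_apply, Pi.add_apply, id]
  field_simp
  -- eliminating `a = v ^ 2 - t ^ 2` makes the identity polynomial in `t` and `v = √(t ^ 2 + a)`
  generalize √(t ^ 2 + a) = v at hv2 ⊢
  obtain rfl : a = v ^ 2 - t ^ 2 := by linarith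
  ring

theorem sq_sub_sq_eq_gapDerivSignPoly {a : ℝ} (ha : 0 ≤ a) (t : ℝ) :
    (t * gapDerivPoly a (t ^ 2)) ^ 2 - ((t ^ 2 + 2) ^ 2 * (t ^ 2 + a) * √(t ^ 2 + a)) ^ 2 =
      gapDerivSignPoly a (t ^ 2) := by
  rw [mul_pow _ √_, sq_sqrt (by positivity), gapDerivSignPoly]
  ring

theorem gapDeriv_nonneg {a t : ℝ} (ha : 0 ≤ a) (ht : 0 ≤ t)
    (h : gapDerivSignPoly a (t ^ 2) ≤ 0) : 0 ≤ gapDeriv a t := by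
  have hQ : 0 ≤ t * gapDerivPoly a (t ^ 2) := by unfold gapDerivPoly; positivity
  have hle : t * gapDerivPoly a (t ^ 2) ≤ (t ^ 2 + 2) ^ 2 * (t ^ 2 + a) * √(t ^ 2 + a) :=
    (pow_le_pow_iff_left₀ hQ (by positivity) two_ne_zero).1 <| by
      linarith [sq_sub_sq_eq_gapDerivSignPoly ha t]
  unfold gapDeriv
  have := sub_nonneg.2 hle
  positivity

theorem gapDeriv_nonpos {a t : ℝ} (ha : 0 ≤ a) (ht : 0 ≤ t)
    (h : 0 ≤ gapDerivSignPoly a (t ^ 2)) : gapDeriv a t ≤ 0 := by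
  have hQ : 0 ≤ t * gapDerivPoly a (t ^ 2) := by unfold gapDerivPoly; positivity
  have hle : (t ^ 2 + 2) ^ 2 * (t ^ 2 + a) * √(t ^ 2 + a) ≤ t * gapDerivPoly a (t ^ 2) :=
    (pow_le_pow_iff_left₀ (by positivity) hQ two_ne_zero).1 <| by
      linarith [sq_sub_sq_eq_gapDerivSignPoly ha t]
  unfold gapDeriv
  exact div_nonpos_of_nonpos_of_nonneg
    (mul_nonpos_of_nonneg_of_nonpos (by positivity) (sub_nonpos.2 hle)) (by positivity)

theorem gaussianTailBound_zero (a : ℝ) : gaussianTailBound a 0 = (√a)⁻¹ := by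
  simp [gaussianTailBound, div_mul_eq_div_div]

theorem gaussianTail_le_gaussianTailBound {a t : ℝ} (ha₀ : 0 < a) (ha : a ≤ 2 / π)
    (ht : 0 ≤ t) : gaussianTail t ≤ gaussianTailBound a t := by
  have ha₁ : a ≤ 1 := ha.trans ((div_le_one pi_pos).2 (by linarith [pi_gt_three]))
  obtain ⟨c, ⟨hc₀, -⟩, hc⟩ : ∃ c ∈ Icc (0 : ℝ) 1, gapDerivSignPoly a (c ^ 2) = 0 := by
    refine intermediate_value_Icc zero_le_one (f := fun s => gapDerivSignPoly a (s ^ 2))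
      (by unfold gapDerivSignPoly gapDerivPoly; fun_prop) ⟨?_, ?_⟩
    · rw [zero_pow two_ne_zero, gapDerivSignPoly_zero]
      linarith [pow_pos ha₀ 3]
    · simpa using gapDerivSignPoly_one_nonneg ha₀.le ha₁
  have hmono := monotoneOn_gapDerivSignPoly ha₀.le ha₁
  have hzero : gaussianTail 0 ≤ gaussianTailBound a 0 := by
    have hπa : √(2 * π) * √a ≤ 2 := by
      rw [← sqrt_mul (by positivity), sqrt_le_left zero_le_two]
      nlinarith [(le_div_iff₀ pi_pos).1 ha]
    rw [gaussianTail_zero, gaussianTailBound_zero, ← one_div, le_div_iff₀ (sqrt_pos.2 ha₀)]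
    linarith
  rw [← sub_nonneg]
  refine nonneg_of_hasDerivAt_of_sign_change (f := fun s => gaussianTailBound a s - gaussianTail s)
    (hasDerivAt_gaussianTailBound_sub_gaussianTail ha₀) (a := 0) (c := c)
    (g := fun s => -gaussianTail s) (fun y hy => ?_) (fun y hy => ?_) (sub_nonneg.2 hzero)
    (by simpa using tendsto_gaussianTail_atTop.neg) ?_ ht
  · refine gapDeriv_nonneg ha₀.le hy.1.le (hc ▸ hmono (sq_nonneg y) (sq_nonneg c) ?_)
    exact pow_le_pow_left₀ hy.1.le hy.2.le 2
  · refine gapDeriv_nonpos ha₀.le (hc₀.trans hy.le) (hc ▸ hmono (sq_nonneg c) (sq_nonneg y) ?_)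
    exact pow_le_pow_left₀ hc₀ (le_of_lt hy) 2
  · filter_upwards [eventually_ge_atTop 0] with s hs
    have : 0 ≤ gaussianTailBound a s := by unfold gaussianTailBound; positivity
    linarith

/-- For `Z ~ N(0,1)` and `t ≥ 0`,
`E[(|Z| - t)₊²] ≤ 4 exp(-t²/2) / ((t² + 2) √(2π t² + 4))`. -/
theorem gaussian_positive_part_second_moment_bound (t : ℝ) (ht : 0 ≤ t) :
    (∫ x, (max (|x| - t) 0) ^ 2 ∂(gaussianReal 0 1)) ≤
      4 * Real.exp (-t ^ 2 / 2) / ((t ^ 2 + 2) * Real.sqrt (2 * Real.pi * t ^ 2 + 4)) := by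
  have hsqrt : √(2 * π) * √(t ^ 2 + 2 / π) = √(2 * π * t ^ 2 + 4) := by
    rw [← sqrt_mul (by positivity)]
    congr 1
    field_simp
    ring
  rw [integral_gaussianReal_posPart_abs_sub_sq ht, integral_Ioi_sub_sq_mul_exp_neg_sq_div_two,
    ← hsqrt]
  calc 2 / √(2 * π) * ((t ^ 2 + 1) * gaussianTail t - t * exp (-t ^ 2 / 2))
      ≤ 2 / √(2 * π) * ((t ^ 2 + 1) * gaussianTailBound (2 / π) t - t * exp (-t ^ 2 / 2)) := by
        gcongr
        exact gaussianTail_le_gaussianTailBound (by positivity) le_rfl ht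
    _ = 4 * exp (-t ^ 2 / 2) / ((t ^ 2 + 2) * (√(2 * π) * √(t ^ 2 + 2 / π))) := by
        unfold gaussianTailBound
        field_simp
        ring
end

section
/- Let Z ~ N(0,1). For absolutely continuous g : ℝ → ℝ with E[|g'(Z)|] < ∞, one has E[|Z g(Z)|] < ∞ and E[Z g(Z)] = E[g'(Z)]. -/
/-!
With `orientedIndicator a t` the signed indicator of the oriented interval from `a` to `t`,
absolute continuity reads `g t - g a = ∫ x, orientedIndicator a t x * g' x`. If `k` is `≥ 0` to the
right of `a`, `≤ 0` to the left of `a` and has integral `0`, then `orientedIndicator a t x * k t`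
is nonnegative and its integral in `t` is the tail `∫ t in Ioi x, k t`; so Tonelli justifies
Fubini, which gives `∫ g k = ∫ g' · tail`. For `k t = (t - μ) φ(t)`, with `φ` the density of
`N(μ, v)`, `-v φ` is an antiderivative of `k`, so the tail is `v φ(x)`.
-/

open MeasureTheory ProbabilityTheory Set Filter Function
open scoped NNReal Topology

noncomputable def orientedIndicator (a b x : ℝ) : ℝ :=
  (Ioc a b).indicator 1 x - (Ioc b a).indicator 1 x

section
variable {a b x : ℝ}

lemma orientedIndicator_of_le (h : a ≤ b) :
    orientedIndicator a b x = (Ioc a b).indicator 1 x := by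
  simp [orientedIndicator, Ioc_eq_empty_of_le h]

lemma orientedIndicator_of_ge (h : b ≤ a) :
    orientedIndicator a b x = -(Ioc b a).indicator 1 x := by
  simp [orientedIndicator, Ioc_eq_empty_of_le h]

lemma measurable_orientedIndicator :
    Measurable (fun p : ℝ × ℝ => orientedIndicator a p.2 p.1) := by
  simp only [orientedIndicator, indicator_apply, mem_Ioc, Pi.one_apply]
  refine .sub (.ite ?_ measurable_const measurable_const) (.ite ?_ measurable_const measurable_const)
  · exact (measurableSet_lt measurable_const measurable_fst).inter
      (measurableSet_le measurable_fst measurable_snd)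
  · exact (measurableSet_lt measurable_snd measurable_fst).inter
      (measurableSet_le measurable_fst measurable_const)

lemma integral_orientedIndicator_mul (a b : ℝ) (f : ℝ → ℝ) :
    ∫ x, orientedIndicator a b x * f x = ∫ x in a..b, f x := by
  rcases le_total a b with h | h
  · simp_rw [orientedIndicator_of_le h, ← indicator_mul_left, Pi.one_apply, one_mul,
      integral_indicator measurableSet_Ioc, intervalIntegral.integral_of_le h]
  · simp_rw [orientedIndicator_of_ge h, neg_mul, ← indicator_mul_left, Pi.one_apply, one_mul,
      integral_neg, integral_indicator measurableSet_Ioc, intervalIntegral.integral_of_ge h]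

end

section
variable {a x : ℝ} {k : ℝ → ℝ}

lemma orientedIndicator_mul_of_lt (h : a < x) (t : ℝ) :
    orientedIndicator a t x * k t = (Ici x).indicator k t := by
  by_cases ht : x ≤ t <;> simp [orientedIndicator, h, ht, h.not_ge]

lemma orientedIndicator_mul_of_ge (h : x ≤ a) (t : ℝ) :
    orientedIndicator a t x * k t = -(Iio x).indicator k t := by
  by_cases ht : t < x <;> simp [orientedIndicator, h, ht, h.not_gt]

lemma orientedIndicator_mul_nonneg (hk_gt : ∀ t, a < t → 0 ≤ k t) (hk_lt : ∀ t, t < a → k t ≤ 0)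
    (t x : ℝ) : 0 ≤ orientedIndicator a t x * k t := by
  rcases lt_or_ge a x with hx | hx
  · rw [orientedIndicator_mul_of_lt hx]
    exact indicator_nonneg (fun t ht => hk_gt t (hx.trans_le ht)) t
  · rw [orientedIndicator_mul_of_ge hx, neg_nonneg]
    exact indicator_nonpos (fun t ht => hk_lt t (lt_of_lt_of_le ht hx)) t

lemma integrable_orientedIndicator_mul (hk : Integrable k) (x : ℝ) :
    Integrable (fun t => orientedIndicator a t x * k t) := by
  rcases lt_or_ge a x with hx | hx
  · simp_rw [orientedIndicator_mul_of_lt hx]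
    exact hk.indicator measurableSet_Ici
  · simp_rw [orientedIndicator_mul_of_ge hx]
    exact (hk.indicator measurableSet_Iio).neg

lemma integral_orientedIndicator_mul_eq_integral_Ioi (hk : Integrable k) (hk_zero : ∫ t, k t = 0)
    (x : ℝ) : ∫ t, orientedIndicator a t x * k t = ∫ t in Ioi x, k t := by
  rcases lt_or_ge a x with hx | hx
  · simp_rw [orientedIndicator_mul_of_lt hx, integral_indicator measurableSet_Ici,
      integral_Ici_eq_integral_Ioi]
  · simp_rw [orientedIndicator_mul_of_ge hx, integral_neg, integral_indicator measurableSet_Iio,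
      ← integral_Iic_eq_integral_Iio]
    linarith [intervalIntegral.integral_Iic_add_Ioi (b := x) hk.integrableOn hk.integrableOn]

end

section
variable {a : ℝ} {k g g' : ℝ → ℝ}

lemma integrable_uncurry_deriv_mul_orientedIndicator_mul (hk : Integrable k)
    (hk_zero : ∫ t, k t = 0) (hk_gt : ∀ t, a < t → 0 ≤ k t) (hk_lt : ∀ t, t < a → k t ≤ 0)
    (hg'_meas : AEStronglyMeasurable g') (hg' : Integrable fun x => g' x * ∫ t in Ioi x, k t) :
    Integrable (uncurry fun x t => g' x * (orientedIndicator a t x * k t)) (volume.prod volume) := by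
  have hmeas : AEStronglyMeasurable (uncurry fun x t => g' x * (orientedIndicator a t x * k t))
      (volume.prod volume) :=
    hg'_meas.comp_fst.mul
      (measurable_orientedIndicator.aestronglyMeasurable.mul hk.aestronglyMeasurable.comp_snd)
  refine (integrable_prod_iff hmeas).2
    ⟨ae_of_all _ fun x => (integrable_orientedIndicator_mul hk x).const_mul (g' x),
      hg'.norm.congr ?_⟩
  refine ae_of_all _ fun x => ?_
  have htail : ∫ t, ‖orientedIndicator a t x * k t‖ = ∫ t in Ioi x, k t := by
    simp_rw [Real.norm_of_nonneg (orientedIndicator_mul_nonneg hk_gt hk_lt _ _)]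
    exact integral_orientedIndicator_mul_eq_integral_Ioi hk hk_zero x
  have htail_nonneg : 0 ≤ ∫ t in Ioi x, k t :=
    htail ▸ integral_nonneg fun t => norm_nonneg _
  simp only [uncurry_apply_pair, norm_mul (g' x), integral_const_mul, htail,
    Real.norm_of_nonneg htail_nonneg]

theorem integrable_mul_and_integral_mul_eq_integral_deriv_mul_tail (hk : Integrable k)
    (hk_zero : ∫ t, k t = 0) (hk_gt : ∀ t, a < t → 0 ≤ k t) (hk_lt : ∀ t, t < a → k t ≤ 0)
    (hg : ∀ t, g t - g a = ∫ x in a..t, g' x) (hg'_meas : AEStronglyMeasurable g')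
    (hg' : Integrable fun x => g' x * ∫ t in Ioi x, k t) :
    Integrable (fun t => g t * k t) ∧ ∫ t, g t * k t = ∫ x, g' x * ∫ t in Ioi x, k t := by
  have hF := integrable_uncurry_deriv_mul_orientedIndicator_mul hk hk_zero hk_gt hk_lt hg'_meas hg'
  have hinner (t : ℝ) : ∫ x, g' x * (orientedIndicator a t x * k t) = (g t - g a) * k t := by
    simp_rw [← mul_assoc, mul_comm (g' _), integral_mul_const, integral_orientedIndicator_mul, hg]
  have hsub : Integrable fun t => (g t - g a) * k t := by
    simpa only [uncurry_apply_pair, hinner] using hF.integral_prod_right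
  have hsplit : (fun t => g t * k t) = fun t => (g t - g a) * k t + g a * k t := by
    ext t; ring
  refine ⟨hsplit ▸ hsub.add (hk.const_mul _), ?_⟩
  calc ∫ t, g t * k t = ∫ t, (g t - g a) * k t := by
        rw [hsplit, integral_add hsub (hk.const_mul _), integral_const_mul, hk_zero, mul_zero,
          add_zero]
    _ = ∫ t, ∫ x, g' x * (orientedIndicator a t x * k t) := by simp_rw [hinner]
    _ = ∫ x, ∫ t, g' x * (orientedIndicator a t x * k t) := (integral_integral_swap hF).symm
    _ = ∫ x, g' x * ∫ t in Ioi x, k t := by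
        simp_rw [integral_const_mul, integral_orientedIndicator_mul_eq_integral_Ioi hk hk_zero]

end

section
variable {μ : ℝ} {v : ℝ≥0}

lemma integrable_gaussianReal_iff {E : Type*} [NormedAddCommGroup E] [NormedSpace ℝ E] {f : ℝ → E}
    (hv : v ≠ 0) :
    Integrable f (gaussianReal μ v) ↔ Integrable (fun x => gaussianPDFReal μ v x • f x) := by
  rw [gaussianReal_of_var_ne_zero _ hv, integrable_withDensity_iff_integrable_smul'
    (measurable_gaussianPDF _ _) (ae_of_all _ fun _ => gaussianPDF_lt_top)]
  simp_rw [toReal_gaussianPDF]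

lemma hasDerivAt_gaussianPDFReal (x : ℝ) :
    HasDerivAt (gaussianPDFReal μ v) (-((x - μ) * gaussianPDFReal μ v x) / v) x := by
  have hexponent : HasDerivAt (fun y => -(y - μ) ^ 2 / (2 * v)) (-(x - μ) / v) x := by
    refine ((((hasDerivAt_id' x).sub_const μ).pow 2).neg.div_const (2 * (v : ℝ))).congr_deriv ?_
    push_cast
    ring
  rw [gaussianPDFReal_def]
  exact (hexponent.exp.const_mul _).congr_deriv (by ring)

lemma integrable_fun_id_gaussianReal : Integrable (fun x => x) (gaussianReal μ v) :=
  (memLp_id_gaussianReal 1).integrable le_rfl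

lemma integrable_sub_mul_gaussianPDFReal :
    Integrable fun x => (x - μ) * gaussianPDFReal μ v x := by
  rcases eq_or_ne v 0 with rfl | hv
  · simp
  have hsub : Integrable (fun x => x - μ) (gaussianReal μ v) :=
    integrable_fun_id_gaussianReal.sub (integrable_const μ)
  simpa only [smul_eq_mul, mul_comm] using (integrable_gaussianReal_iff hv).1 hsub

lemma tendsto_gaussianPDFReal_atTop : Tendsto (gaussianPDFReal μ v) atTop (𝓝 0) := by
  refine tendsto_zero_of_hasDerivAt_of_integrableOn_Ioi (a := 0)
    (fun x _ => hasDerivAt_gaussianPDFReal x) ?_ (integrable_gaussianPDFReal μ v).integrableOn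
  exact (integrable_sub_mul_gaussianPDFReal.neg.div_const _).integrableOn

lemma integral_Ioi_sub_mul_gaussianPDFReal (x : ℝ) :
    ∫ t in Ioi x, (t - μ) * gaussianPDFReal μ v t = v * gaussianPDFReal μ v x := by
  rcases eq_or_ne v 0 with rfl | hv
  · simp
  have hderiv (t : ℝ) : HasDerivAt (fun t => -(v * gaussianPDFReal μ v t))
      ((t - μ) * gaussianPDFReal μ v t) t :=
    ((hasDerivAt_gaussianPDFReal t).const_mul (v : ℝ)).neg.congr_deriv (by field_simp)
  have hlim : Tendsto (fun t => -(v * gaussianPDFReal μ v t)) atTop (𝓝 0) := by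
    simpa using (tendsto_gaussianPDFReal_atTop.const_mul (v : ℝ)).neg
  rw [integral_Ioi_of_hasDerivAt_of_tendsto' (fun t _ => hderiv t)
    integrable_sub_mul_gaussianPDFReal.integrableOn hlim, zero_sub, neg_neg]

lemma integral_sub_mul_gaussianPDFReal (hv : v ≠ 0) :
    ∫ x, (x - μ) * gaussianPDFReal μ v x = 0 := by
  have := integral_gaussianReal_eq_integral_smul (μ := μ) (f := fun x => x - μ) hv
  rw [integral_sub integrable_fun_id_gaussianReal (integrable_const μ),
    integral_id_gaussianReal] at this
  simpa [smul_eq_mul, mul_comm] using this.symm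

end

theorem stein_identity_gaussianReal {μ : ℝ} {v : ℝ≥0} (hv : v ≠ 0) {g g' : ℝ → ℝ}
    (hg : ∀ t, g t - g μ = ∫ x in μ..t, g' x) (hg' : Integrable g' (gaussianReal μ v)) :
    Integrable (fun x => (x - μ) * g x) (gaussianReal μ v) ∧
      ∫ x, (x - μ) * g x ∂gaussianReal μ v = v * ∫ x, g' x ∂gaussianReal μ v := by
  have hg'_density := (integrable_gaussianReal_iff hv).1 hg'
  have hg'_tail : Integrable fun x => g' x * ∫ t in Ioi x, (t - μ) * gaussianPDFReal μ v t := by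
    simp_rw [integral_Ioi_sub_mul_gaussianPDFReal]
    exact (hg'_density.const_mul (v : ℝ)).congr (ae_of_all _ fun x => by
      simp only [smul_eq_mul]; ring)
  obtain ⟨hint, heq⟩ := integrable_mul_and_integral_mul_eq_integral_deriv_mul_tail
    integrable_sub_mul_gaussianPDFReal (integral_sub_mul_gaussianPDFReal hv)
    (fun t ht => mul_nonneg (sub_nonneg.2 ht.le) (gaussianPDFReal_nonneg μ v t))
    (fun t ht => mul_nonpos_of_nonpos_of_nonneg (sub_nonpos.2 ht.le) (gaussianPDFReal_nonneg μ v t))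
    hg (hg'.aestronglyMeasurable.mono_ac (gaussianReal_absolutelyContinuous' μ hv)) hg'_tail
  have hreassoc (x : ℝ) : gaussianPDFReal μ v x • ((x - μ) * g x) =
      g x * ((x - μ) * gaussianPDFReal μ v x) := by
    rw [smul_eq_mul]; ring
  refine ⟨(integrable_gaussianReal_iff hv).2 (by simpa only [hreassoc] using hint), ?_⟩
  rw [integral_gaussianReal_eq_integral_smul hv, integral_gaussianReal_eq_integral_smul hv,
    ← integral_const_mul]
  simp_rw [hreassoc, heq, integral_Ioi_sub_mul_gaussianPDFReal, smul_eq_mul]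
  congr with x
  ring

theorem stein_identity_univariate_general (g g' : ℝ → ℝ)
    (hac : ∀ a b : ℝ, g b - g a = ∫ x in a..b, g' x)
    (hg' : Integrable g' (gaussianReal 0 1)) :
    Integrable (fun x => x * g x) (gaussianReal 0 1) ∧
      ∫ x, x * g x ∂(gaussianReal 0 1) = ∫ x, g' x ∂(gaussianReal 0 1) := by
  simpa using stein_identity_gaussianReal one_ne_zero (fun t => hac 0 t) hg'

/-- Univariate Stein identity: if `g` is absolutely continuous with weak derivative `g'`
(expressed via the fundamental theorem of calculus) and `E[|g'(Z)|] < ∞` for `Z ~ N(0,1)`,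
then `E[|Z g(Z)|] < ∞` and `E[Z g(Z)] = E[g'(Z)]`. -/
theorem stein_identity_univariate (g g' : ℝ → ℝ)
    (hloc : ∀ a b : ℝ, IntervalIntegrable g' MeasureTheory.volume a b)
    (hac : ∀ a b : ℝ, g b - g a = ∫ x in a..b, g' x)
    (hg' : Integrable g' (gaussianReal 0 1)) :
    Integrable (fun x => x * g x) (gaussianReal 0 1) ∧
      ∫ x, x * g x ∂(gaussianReal 0 1) = ∫ x, g' x ∂(gaussianReal 0 1) :=
  stein_identity_univariate_general g g' hac hg'
end
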